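/- arXiv:2310.09204 — 6 statements merged into one kernel-verified Lean document; each statement's English description precedes it below -/
import Mathlib

section
/- Let λ, Λ > 0 be such that λ‖u‖² ≤ |||u|||² ≤ Λ‖u‖² for all u ∈ V_h. Then the additive Schwarz operator P_ad = Σ_{i=1}^n P_i satisfies (1/Λ)‖u‖² ≤ ⟨P_ad u, u⟩ ≤ (1/λ)‖u‖² for all u ∈ V_h; consequently the spectral condition number of P_ad (the ratio of its largest to its smallest eigenvalue, equivalently the ratio of the supremum to the infimum of the Rayleigh quotient ⟨P_ad u, u⟩/‖u‖² over nonzero u ∈ V_h) is at most Λ/λ. -/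
open scoped RealInnerProductSpace

/-- The squared splitting norm `|||u|||²` associated to a family of subspaces:
the infimum of `∑ i, ‖u_i‖²` over all decompositions `u = ∑ i, u_i` with `u_i ∈ V_{h,i}`. -/
noncomputable def splitNormSq {V : Type*} [NormedAddCommGroup V] [InnerProductSpace ℝ V]
    {n : ℕ} (Vsub : Fin n → Submodule ℝ V) (u : V) : ℝ :=
  sInf {s : ℝ | ∃ w : Fin n → V, (∀ i, w i ∈ Vsub i) ∧ (∑ i, w i) = u ∧ s = ∑ i, ‖w i‖ ^ 2}

/-!
Write `Q u = ⟪P_ad u, u⟫ = ∑ i, ‖P_i u‖²`. For any splitting `u = ∑ i, u_i` with `u_i ∈ V_{h,i}`,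
`‖u‖² = ∑ i, ⟪u_i, P_i u⟫ ≤ (∑ i, ‖u_i‖²)^{1/2} Q(u)^{1/2}` by Cauchy–Schwarz twice, so
`‖u‖⁴ ≤ |||u|||² Q(u) ≤ Λ ‖u‖² Q(u)`: the lower bound. For the upper bound, `(P_i u)_i` is a
splitting of `v = P_ad u`, so `λ ‖v‖² ≤ |||v|||² ≤ Q(u) = ⟪v, u⟫ ≤ ‖v‖ ‖u‖`, whence `λ ‖v‖ ≤ ‖u‖`
and `λ Q(u) ≤ ‖u‖²`. The condition number bound is the ratio of the two Rayleigh quotient bounds.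
-/

open Finset

theorem Submodule.exists_sum_eq_of_mem_iSup {R M ι : Type*} [Semiring R] [AddCommMonoid M]
    [Module R M] [Fintype ι] {p : ι → Submodule R M} {x : M} (hx : x ∈ ⨆ i, p i) :
    ∃ w : ι → M, (∀ i, w i ∈ p i) ∧ ∑ i, w i = x := by
  obtain ⟨f, hf, rfl⟩ := (Submodule.mem_iSup_iff_exists_finsupp p x).1 hx
  exact ⟨f, hf, (Finsupp.sum_fintype f (fun _ x => x) fun _ => rfl).symm⟩

theorem Real.sSup_div_sInf_le_of_forall_mem_Icc {S : Set ℝ} {a b : ℝ} (ha : 0 < a) (hb : 0 ≤ b)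
    (hS : ∀ r ∈ S, r ∈ Set.Icc a b) : sSup S / sInf S ≤ b / a := by
  rcases S.eq_empty_or_nonempty with rfl | hne
  · simp only [Real.sSup_empty, Real.sInf_empty, zero_div]
    positivity
  · exact div_le_div₀ hb (csSup_le hne fun r hr => (hS r hr).2)
      ha (le_csInf hne fun r hr => (hS r hr).1)

section Projections

variable {V ι : Type*} [NormedAddCommGroup V] [InnerProductSpace ℝ V] [Fintype ι]
  {K : ι → Submodule ℝ V} [∀ i, (K i).HasOrthogonalProjection]

theorem sum_starProjection_mem_iSup (u : V) : ∑ i, (K i).starProjection u ∈ ⨆ i, K i :=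
  Submodule.sum_mem _ fun i _ => le_iSup K i ((K i).starProjection_apply_mem u)

theorem inner_sum_starProjection_self (u : V) :
    ⟪∑ i, (K i).starProjection u, u⟫ = ∑ i, ‖(K i).starProjection u‖ ^ 2 := by
  rw [sum_inner]
  refine sum_congr rfl fun i _ => ?_
  simpa using (K i).re_inner_starProjection_eq_normSq u

theorem sq_norm_sq_le_mul_sum_norm_sq_starProjection {u : V} {w : ι → V}
    (hw : ∀ i, w i ∈ K i) (hsum : ∑ i, w i = u) :
    (‖u‖ ^ 2) ^ 2 ≤ (∑ i, ‖w i‖ ^ 2) * ∑ i, ‖(K i).starProjection u‖ ^ 2 := by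
  have hsplit : ‖u‖ ^ 2 = ∑ i, ⟪w i, (K i).starProjection u⟫ := by
    rw [← real_inner_self_eq_norm_sq]
    nth_rewrite 1 [← hsum]
    rw [sum_inner]
    refine sum_congr rfl fun i _ => ?_
    rw [← (K i).starProjection_eq_self_iff.2 (hw i), Submodule.inner_starProjection_left_eq_right,
      (K i).starProjection_eq_self_iff.2 (hw i)]
  have hle : ‖u‖ ^ 2 ≤ ∑ i, ‖w i‖ * ‖(K i).starProjection u‖ := by
    rw [hsplit]
    exact sum_le_sum fun i _ => real_inner_le_norm _ _
  calc (‖u‖ ^ 2) ^ 2 ≤ (∑ i, ‖w i‖ * ‖(K i).starProjection u‖) ^ 2 := by gcongr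
    _ ≤ _ := sum_mul_sq_le_sq_mul_sq _ _ _

end Projections

section SplitNorm

variable {V : Type*} [NormedAddCommGroup V] [InnerProductSpace ℝ V] {n : ℕ}
  {K : Fin n → Submodule ℝ V}

theorem splitNormSq_le {u : V} {w : Fin n → V} (hw : ∀ i, w i ∈ K i) (hsum : ∑ i, w i = u) :
    splitNormSq K u ≤ ∑ i, ‖w i‖ ^ 2 :=
  csInf_le ⟨0, by rintro s ⟨w, -, -, rfl⟩; positivity⟩ ⟨w, hw, hsum, rfl⟩

variable [∀ i, (K i).HasOrthogonalProjection]

theorem sq_norm_sq_le_splitNormSq_mul {u : V} (hu : u ∈ ⨆ i, K i) :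
    (‖u‖ ^ 2) ^ 2 ≤ splitNormSq K u * ∑ i, ‖(K i).starProjection u‖ ^ 2 := by
  obtain ⟨w, hw, hsum⟩ := Submodule.exists_sum_eq_of_mem_iSup hu
  rcases (sum_nonneg fun i _ => sq_nonneg ‖(K i).starProjection u‖).eq_or_lt with hQ | hQ
  · have h := sq_norm_sq_le_mul_sum_norm_sq_starProjection hw hsum
    rwa [← hQ, mul_zero] at h ⊢
  · rw [← div_le_iff₀ hQ]
    refine le_csInf ⟨_, w, hw, hsum, rfl⟩ ?_
    rintro s ⟨w', hw', hsum', rfl⟩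
    exact (div_le_iff₀ hQ).2 (sq_norm_sq_le_mul_sum_norm_sq_starProjection hw' hsum')

theorem norm_sq_le_mul_inner_sum_starProjection {u : V} {Λ : ℝ} (hu : u ∈ ⨆ i, K i)
    (hΛ : splitNormSq K u ≤ Λ * ‖u‖ ^ 2) :
    ‖u‖ ^ 2 ≤ Λ * ⟪∑ i, (K i).starProjection u, u⟫ := by
  rcases eq_or_ne u 0 with rfl | hu0
  · simp
  have hpos : 0 < ‖u‖ ^ 2 := by positivity
  rw [inner_sum_starProjection_self]
  refine le_of_mul_le_mul_left ?_ hpos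
  calc ‖u‖ ^ 2 * ‖u‖ ^ 2 = (‖u‖ ^ 2) ^ 2 := (sq _).symm
    _ ≤ splitNormSq K u * ∑ i, ‖(K i).starProjection u‖ ^ 2 := sq_norm_sq_le_splitNormSq_mul hu
    _ ≤ Λ * ‖u‖ ^ 2 * ∑ i, ‖(K i).starProjection u‖ ^ 2 := by gcongr
    _ = ‖u‖ ^ 2 * (Λ * ∑ i, ‖(K i).starProjection u‖ ^ 2) := by ring

theorem mul_inner_sum_starProjection_le {u : V} {lam : ℝ} (hlam : 0 < lam)
    (h : lam * ‖∑ i, (K i).starProjection u‖ ^ 2 ≤ splitNormSq K (∑ i, (K i).starProjection u)) :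
    lam * ⟪∑ i, (K i).starProjection u, u⟫ ≤ ‖u‖ ^ 2 := by
  set v := ∑ i, (K i).starProjection u
  have hQ : ⟪v, u⟫ ≤ ‖v‖ * ‖u‖ := real_inner_le_norm v u
  have hv : lam * ‖v‖ ^ 2 ≤ ⟪v, u⟫ := by
    refine h.trans ?_
    rw [inner_sum_starProjection_self]
    exact splitNormSq_le (fun i => (K i).starProjection_apply_mem u) rfl
  have hlv : lam * ‖v‖ ≤ ‖u‖ := by
    rcases (norm_nonneg v).eq_or_lt with hv0 | hv0
    · rw [← hv0, mul_zero]
      positivity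
    · nlinarith
  calc lam * ⟪v, u⟫ ≤ lam * ‖v‖ * ‖u‖ := by rw [mul_assoc]; gcongr
    _ ≤ ‖u‖ * ‖u‖ := by gcongr
    _ = ‖u‖ ^ 2 := (sq _).symm

end SplitNorm

theorem additiveSchwarz_condition_number_general
    {V : Type*} [NormedAddCommGroup V] [InnerProductSpace ℝ V]
    {n : ℕ} (Vsub : Fin n → Submodule ℝ V) [∀ i, FiniteDimensional ℝ (Vsub i)]
    (Vh : Submodule ℝ V) (hVh : Vh = ⨆ i, Vsub i)
    (lam Lam : ℝ) (hlam : 0 < lam) (hLam : 0 < Lam)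
    (hsplit : ∀ u ∈ Vh,
      lam * ‖u‖ ^ 2 ≤ splitNormSq Vsub u ∧ splitNormSq Vsub u ≤ Lam * ‖u‖ ^ 2)
    (Pad : V → V) (hPad : ∀ u, Pad u = ∑ i, ((Submodule.orthogonalProjectionOnto (Vsub i) u : V))) :
    (∀ u ∈ Vh, (1 / Lam) * ‖u‖ ^ 2 ≤ ⟪Pad u, u⟫ ∧ ⟪Pad u, u⟫ ≤ (1 / lam) * ‖u‖ ^ 2) ∧
    sSup {r : ℝ | ∃ u ∈ Vh, u ≠ 0 ∧ r = ⟪Pad u, u⟫ / ‖u‖ ^ 2} /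
        sInf {r : ℝ | ∃ u ∈ Vh, u ≠ 0 ∧ r = ⟪Pad u, u⟫ / ‖u‖ ^ 2} ≤ Lam / lam := by
  subst hVh
  have hbounds : ∀ u ∈ ⨆ i, Vsub i,
      (1 / Lam) * ‖u‖ ^ 2 ≤ ⟪Pad u, u⟫ ∧ ⟪Pad u, u⟫ ≤ (1 / lam) * ‖u‖ ^ 2 := by
    intro u hu
    rw [hPad, one_div, one_div, inv_mul_le_iff₀ hLam, le_inv_mul_iff₀ hlam]
    exact ⟨norm_sq_le_mul_inner_sum_starProjection hu (hsplit u hu).2,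
      mul_inner_sum_starProjection_le hlam (hsplit _ (sum_starProjection_mem_iSup u)).1⟩
  refine ⟨hbounds, ?_⟩
  calc _ ≤ (1 / lam) / (1 / Lam) :=
        Real.sSup_div_sInf_le_of_forall_mem_Icc (by positivity) (by positivity) ?_
    _ = Lam / lam := by field_simp
  rintro r ⟨u, hu, hu0, rfl⟩
  have hpos : 0 < ‖u‖ ^ 2 := by positivity
  exact ⟨(le_div_iff₀ hpos).2 (hbounds u hu).1, (div_le_iff₀ hpos).2 (hbounds u hu).2⟩

/-- Abstract condition number estimate for additive Schwarz subspace splittings. -/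
theorem additiveSchwarz_condition_number
    {V : Type*} [NormedAddCommGroup V] [InnerProductSpace ℝ V] [CompleteSpace V]
    {n : ℕ} (Vsub : Fin n → Submodule ℝ V) [∀ i, FiniteDimensional ℝ (Vsub i)]
    (Vh : Submodule ℝ V) (hVh : Vh = ⨆ i, Vsub i)
    (lam Lam : ℝ) (hlam : 0 < lam) (hLam : 0 < Lam)
    (hsplit : ∀ u ∈ Vh,
      lam * ‖u‖ ^ 2 ≤ splitNormSq Vsub u ∧ splitNormSq Vsub u ≤ Lam * ‖u‖ ^ 2)
    (Pad : V → V) (hPad : ∀ u, Pad u = ∑ i, ((Submodule.orthogonalProjectionOnto (Vsub i) u : V))) :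
    (∀ u ∈ Vh, (1 / Lam) * ‖u‖ ^ 2 ≤ ⟪Pad u, u⟫ ∧ ⟪Pad u, u⟫ ≤ (1 / lam) * ‖u‖ ^ 2) ∧
    sSup {r : ℝ | ∃ u ∈ Vh, u ≠ 0 ∧ r = ⟪Pad u, u⟫ / ‖u‖ ^ 2} /
        sInf {r : ℝ | ∃ u ∈ Vh, u ≠ 0 ∧ r = ⟪Pad u, u⟫ / ‖u‖ ^ 2} ≤ Lam / lam :=
  additiveSchwarz_condition_number_general Vsub Vh hVh lam Lam hlam hLam hsplit Pad hPad
end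

section
/- Assume condition (A) holds for Π_h and that condition (B) holds for every index i = 1, …, n with constants κ_1, …, κ_n > 0. Let α, A > 0 be such that α‖u‖_𝕍² ≤ |||u|||_𝕍² ≤ A‖u‖_𝕍² for all u ∈ V_h. Then for all f ∈ X_h one has β‖f‖_𝕏² ≤ |||f|||_𝕏² ≤ B‖f‖_𝕏², where β = α / ((max_{1≤i≤n} κ_i)² ‖Π_h‖²) and B = ‖Π_h‖² A. -/
/-- The squared splitting norm `|||u|||_𝕍²` in the Hilbert space `𝕍`. -/
noncomputable def splitNormSqV {V : Type*} [NormedAddCommGroup V] [InnerProductSpace ℝ V]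
    {n : ℕ} (Vsub : Fin n → Submodule ℝ V) (u : V) : ℝ :=
  sInf {s : ℝ | ∃ w : Fin n → V, (∀ i, w i ∈ Vsub i) ∧ (∑ i, w i) = u ∧ s = ∑ i, ‖w i‖ ^ 2}

/-- The squared splitting norm `|||f|||_𝕏²` in the quotient space `𝕏 = 𝕍/𝕍₀`,
with respect to the subspaces `X_{h,i} = T(V_{h,i})`. -/
noncomputable def splitNormSqX {V : Type*} [NormedAddCommGroup V] [InnerProductSpace ℝ V]
    (V₀ : Submodule ℝ V) [IsClosed (V₀ : Set V)]
    {n : ℕ} (Vsub : Fin n → Submodule ℝ V) (f : V ⧸ V₀) : ℝ :=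
  sInf {s : ℝ | ∃ g : Fin n → V ⧸ V₀,
    (∀ i, g i ∈ (Vsub i).map V₀.mkQ) ∧ (∑ i, g i) = f ∧ s = ∑ i, ‖g i‖ ^ 2}

private lemma exists_split_aux {V : Type*} [NormedAddCommGroup V] [InnerProductSpace ℝ V]
    {n : ℕ} (Vsub : Fin n → Submodule ℝ V) {u : V} (hu : u ∈ ⨆ i, Vsub i) :
    ∃ w : Fin n → V, (∀ i, w i ∈ Vsub i) ∧ ∑ i, w i = u := by
  rw [Submodule.mem_iSup_iff_exists_finsupp] at hu
  obtain ⟨ff, hf, hsum⟩ := hu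
  exact ⟨ff, hf, by rw [← hsum, Finsupp.sum_fintype]; intro; rfl⟩

private lemma le_of_forall_pos_le_add_aux {a b : ℝ} (h : ∀ ε : ℝ, 0 < ε → a ≤ b + ε) :
    a ≤ b := by
  by_contra hlt
  push_neg at hlt
  have := h ((a - b)/2) (by linarith)
  linarith

set_option maxHeartbeats 1000000 in
/-- Stability of the induced quotient splitting (Theorem on quotient splittings). -/
theorem quotient_splitting_stability
    {V : Type*} [NormedAddCommGroup V] [InnerProductSpace ℝ V] [CompleteSpace V]
    (V₀ : Submodule ℝ V) [IsClosed (V₀ : Set V)]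
    {n : ℕ} (hn : 0 < n) (Vsub : Fin n → Submodule ℝ V) [∀ i, FiniteDimensional ℝ (Vsub i)]
    (Vh : Submodule ℝ V) (hVh : Vh = ⨆ i, Vsub i)
    -- Condition (A): a bounded projection `Π_h` onto `V_h` preserving `𝕍₀`.
    (Pih : V →L[ℝ] V)
    (hPirange : ∀ u : V, Pih u ∈ Vh)
    (hPiproj : ∀ u ∈ Vh, Pih u = u)
    (hPipres : ∀ u ∈ V₀, Pih u ∈ V₀)
    -- Condition (B) for every index `i`, with constants `κ i > 0`.
    (κ : Fin n → ℝ) (hκ : ∀ i, 0 < κ i)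
    (hB : ∀ i, ∀ u ∈ Vsub i,
      sInf {r : ℝ | ∃ u₀ ∈ V₀ ⊓ Vsub i, r = ‖u - u₀‖} ≤
        κ i * sInf {r : ℝ | ∃ u₀ ∈ V₀ ⊓ Vh, r = ‖u - u₀‖})
    -- Stability of the splitting in `𝕍`.
    (α A : ℝ) (hα : 0 < α) (hA : 0 < A)
    (hstable : ∀ u ∈ Vh,
      α * ‖u‖ ^ 2 ≤ splitNormSqV Vsub u ∧ splitNormSqV Vsub u ≤ A * ‖u‖ ^ 2) :
    ∀ f ∈ Vh.map V₀.mkQ,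
      (α / ((⨆ i, κ i) ^ 2 * ‖Pih‖ ^ 2)) * ‖f‖ ^ 2 ≤ splitNormSqX V₀ Vsub f ∧
      splitNormSqX V₀ Vsub f ≤ (‖Pih‖ ^ 2 * A) * ‖f‖ ^ 2 := by
  intro f hf
  obtain ⟨uf, hufVh, hufmk⟩ := Submodule.mem_map.mp hf
  have hle : ∀ i, Vsub i ≤ Vh := fun i => by rw [hVh]; exact le_iSup Vsub i
  have hmkle : ∀ x : V, ‖V₀.mkQ x‖ ≤ ‖x‖ := fun x => by
    rw [Submodule.mkQ_apply]; exact Submodule.Quotient.norm_mk_le V₀ x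
  set κm : ℝ := ⨆ i, κ i with hκm
  have hκle : ∀ i, κ i ≤ κm := fun i => le_ciSup (Set.finite_range κ).bddAbove i
  have hκmpos : 0 < κm := lt_of_lt_of_le (hκ ⟨0, hn⟩) (hκle ⟨0, hn⟩)
  set SX : Set ℝ := {s : ℝ | ∃ g : Fin n → V ⧸ V₀,
    (∀ i, g i ∈ (Vsub i).map V₀.mkQ) ∧ (∑ i, g i) = f ∧ s = ∑ i, ‖g i‖ ^ 2} with hSX
  have hSXbdd : BddBelow SX := ⟨0, by rintro s ⟨g, -, -, rfl⟩; positivity⟩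
  have hSXnonneg : ∀ s ∈ SX, 0 ≤ s := by rintro s ⟨g, -, -, rfl⟩; positivity
  have hSXne : SX.Nonempty := by
    obtain ⟨w, hw, hwsum⟩ := exists_split_aux Vsub (hVh ▸ hufVh)
    refine ⟨∑ i, ‖V₀.mkQ (w i)‖ ^ 2, fun i => V₀.mkQ (w i), fun i => ⟨w i, hw i, rfl⟩, ?_, rfl⟩
    rw [← map_sum, hwsum, hufmk]
  have hsplitX : splitNormSqX V₀ Vsub f = sInf SX := rfl
  -- bddBelow for splitting sets in V
  have hSVbdd : ∀ u : V, BddBelow {s : ℝ | ∃ w : Fin n → V,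
      (∀ i, w i ∈ Vsub i) ∧ (∑ i, w i) = u ∧ s = ∑ i, ‖w i‖ ^ 2} :=
    fun u => ⟨0, by rintro s ⟨w, -, -, rfl⟩; positivity⟩
  constructor
  · -- LOWER BOUND
    -- key inequality for each element of SX
    have key : ∀ s ∈ SX, α * ‖f‖ ^ 2 ≤ κm ^ 2 * ‖Pih‖ ^ 2 * s := by
      rintro s ⟨g, hg, hgsum, rfl⟩
      choose uu huuVs huumk using fun i => Submodule.mem_map.mp (hg i)
      set c : Fin n → ℝ := fun i => κ i * (‖Pih‖ * ‖g i‖) with hc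
      have hc0 : ∀ i, 0 ≤ c i := fun i => by
        have := (hκ i).le; positivity
      -- distance bound from condition (B) and the projection
      have hd : ∀ i, sInf {r : ℝ | ∃ u₀ ∈ V₀ ⊓ Vsub i, r = ‖uu i - u₀‖} ≤ c i := by
        intro i
        apply le_of_forall_pos_le_add_aux
        intro ε hε
        have hden : 0 < κ i * ‖Pih‖ + 1 := by
          have := (hκ i).le; have := norm_nonneg Pih; positivity
        set δ : ℝ := ε / (κ i * ‖Pih‖ + 1) with hδ
        have hδpos : 0 < δ := div_pos hε hden
        obtain ⟨m, hm, hmlt⟩ := Submodule.Quotient.norm_mk_lt (g i) hδpos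
        have hz0 : uu i - m ∈ V₀ := by
          rw [← Submodule.Quotient.mk_eq_zero V₀]
          have : (Submodule.Quotient.mk (uu i) : V ⧸ V₀) = Submodule.Quotient.mk m := by
            rw [hm]; exact huumk i
          simpa [Submodule.Quotient.mk_sub, sub_eq_zero] using this
        set z : V := Pih (uu i - m) with hzdef
        have hzmem : z ∈ V₀ ⊓ Vh := ⟨hPipres _ hz0, hPirange _⟩
        have huz : uu i - z = Pih m := by
          have h1 : Pih (uu i) = uu i := hPiproj _ (hle i (huuVs i))
          rw [hzdef, map_sub, h1]; exact sub_sub_cancel _ _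
        have h2 : sInf {r : ℝ | ∃ u₀ ∈ V₀ ⊓ Vh, r = ‖uu i - u₀‖} ≤ ‖Pih‖ * (‖g i‖ + δ) := by
          refine le_trans (csInf_le ⟨0, ?_⟩ ⟨z, hzmem, rfl⟩) ?_
          · rintro r ⟨u₀, -, rfl⟩; exact norm_nonneg _
          · rw [huz]
            calc ‖Pih m‖ ≤ ‖Pih‖ * ‖m‖ := Pih.le_opNorm m
              _ ≤ ‖Pih‖ * (‖g i‖ + δ) := by
                  exact mul_le_mul_of_nonneg_left hmlt.le (norm_nonneg _)
        calc sInf {r : ℝ | ∃ u₀ ∈ V₀ ⊓ Vsub i, r = ‖uu i - u₀‖}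
            ≤ κ i * sInf {r : ℝ | ∃ u₀ ∈ V₀ ⊓ Vh, r = ‖uu i - u₀‖} := hB i (uu i) (huuVs i)
          _ ≤ κ i * (‖Pih‖ * (‖g i‖ + δ)) := by
              refine mul_le_mul_of_nonneg_left ?_ (hκ i).le
              refine le_trans ?_ h2
              exact le_refl _
          _ = c i + κ i * ‖Pih‖ * δ := by rw [hc]; ring
          _ ≤ c i + ε := by
              have : κ i * ‖Pih‖ * δ ≤ ε := by
                rw [hδ]
                rw [div_eq_mul_inv]
                have h1 : κ i * ‖Pih‖ ≤ κ i * ‖Pih‖ + 1 := by linarith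
                have h2 : 0 ≤ κ i * ‖Pih‖ := by
                  have := (hκ i).le; have := norm_nonneg Pih; positivity
                calc κ i * ‖Pih‖ * (ε * (κ i * ‖Pih‖ + 1)⁻¹)
                    ≤ (κ i * ‖Pih‖ + 1) * (ε * (κ i * ‖Pih‖ + 1)⁻¹) := by
                      apply mul_le_mul_of_nonneg_right h1
                      positivity
                  _ = ε := by field_simp
              linarith
      -- main ε-estimate
      have hmain : ∀ ε : ℝ, 0 < ε → α * ‖f‖ ^ 2 ≤ ∑ i, (c i + ε) ^ 2 := by
        intro ε hε
        have hex : ∀ i, ∃ z ∈ V₀ ⊓ Vsub i, ‖uu i - z‖ < c i + ε := by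
          intro i
          have hne : Set.Nonempty {r : ℝ | ∃ u₀ ∈ V₀ ⊓ Vsub i, r = ‖uu i - u₀‖} :=
            ⟨‖uu i - 0‖, 0, ⟨zero_mem _, zero_mem _⟩, rfl⟩
          obtain ⟨r, ⟨z, hz, rfl⟩, hrlt⟩ := Real.lt_sInf_add_pos hne hε
          exact ⟨z, hz, lt_of_lt_of_le hrlt (by linarith [hd i])⟩
        choose z hzmem hzlt using hex
        set v : Fin n → V := fun i => uu i - z i with hvdef
        have hvVs : ∀ i, v i ∈ Vsub i := fun i => sub_mem (huuVs i) (hzmem i).2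
        have hvmk : ∀ i, V₀.mkQ (v i) = g i := by
          intro i
          have hz0 : V₀.mkQ (z i) = 0 := by
            rw [Submodule.mkQ_apply, Submodule.Quotient.mk_eq_zero]; exact (hzmem i).1
          rw [hvdef]
          simp only [map_sub, hz0, huumk i, sub_zero]
        set u : V := ∑ i, v i with hudef
        have huVh : u ∈ Vh := sum_mem fun i _ => hle i (hvVs i)
        have humk : V₀.mkQ u = f := by rw [hudef, map_sum]; simp only [hvmk]; exact hgsum
        have h1 : ‖f‖ ≤ ‖u‖ := humk ▸ hmkle u
        have h2 : α * ‖u‖ ^ 2 ≤ splitNormSqV Vsub u := (hstable u huVh).1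
        have h3 : splitNormSqV Vsub u ≤ ∑ i, ‖v i‖ ^ 2 :=
          csInf_le (hSVbdd u) ⟨v, hvVs, rfl, rfl⟩
        have h4 : ∑ i, ‖v i‖ ^ 2 ≤ ∑ i, (c i + ε) ^ 2 := by
          refine Finset.sum_le_sum fun i _ => ?_
          exact pow_le_pow_left₀ (norm_nonneg _) (hzlt i).le 2
        have h0 : α * ‖f‖ ^ 2 ≤ α * ‖u‖ ^ 2 :=
          mul_le_mul_of_nonneg_left (pow_le_pow_left₀ (norm_nonneg f) h1 2) hα.le
        linarith
      have hsum : α * ‖f‖ ^ 2 ≤ ∑ i, (c i) ^ 2 := by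
        apply le_of_forall_pos_le_add_aux
        intro ε hε
        set K : ℝ := ∑ i, (2 * c i + 1) with hK
        have hK0 : 0 ≤ K := Finset.sum_nonneg fun i _ => by linarith [hc0 i]
        set δ : ℝ := min 1 (ε / (K + 1)) with hδ
        have hδpos : 0 < δ := lt_min one_pos (div_pos hε (by linarith))
        have hδ1 : δ ≤ 1 := min_le_left _ _
        have hδ2 : δ ≤ ε / (K + 1) := min_le_right _ _
        have hbound := hmain δ hδpos
        have hexp : ∑ i, (c i + δ) ^ 2 ≤ ∑ i, (c i) ^ 2 + δ * K := by
          have : ∀ i ∈ Finset.univ, (c i + δ) ^ 2 ≤ (c i) ^ 2 + δ * (2 * c i + 1) := by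
            intro i _
            have := hc0 i
            nlinarith [hδpos.le, hδ1]
          calc ∑ i, (c i + δ) ^ 2 ≤ ∑ i, ((c i) ^ 2 + δ * (2 * c i + 1)) :=
                Finset.sum_le_sum this
            _ = ∑ i, (c i) ^ 2 + δ * K := by rw [Finset.sum_add_distrib, Finset.mul_sum]
        have hδK : δ * K ≤ ε := by
          calc δ * K ≤ (ε / (K + 1)) * K := mul_le_mul_of_nonneg_right hδ2 hK0
            _ ≤ (ε / (K + 1)) * (K + 1) := by
                apply mul_le_mul_of_nonneg_left (by linarith)
                positivity
            _ = ε := by field_simp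
        linarith
      have hfinal : ∑ i, (c i) ^ 2 ≤ κm ^ 2 * ‖Pih‖ ^ 2 * ∑ i, ‖g i‖ ^ 2 := by
        rw [Finset.mul_sum]
        refine Finset.sum_le_sum fun i _ => ?_
        have h1 : κ i ^ 2 ≤ κm ^ 2 := pow_le_pow_left₀ (hκ i).le (hκle i) 2
        have h2 : (0:ℝ) ≤ ‖Pih‖ ^ 2 * ‖g i‖ ^ 2 := by positivity
        calc (c i) ^ 2 = κ i ^ 2 * (‖Pih‖ ^ 2 * ‖g i‖ ^ 2) := by rw [hc]; ring
          _ ≤ κm ^ 2 * (‖Pih‖ ^ 2 * ‖g i‖ ^ 2) := mul_le_mul_of_nonneg_right h1 h2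
          _ = κm ^ 2 * ‖Pih‖ ^ 2 * ‖g i‖ ^ 2 := by ring
      linarith
    rw [hsplitX]
    rcases eq_or_lt_of_le (by positivity : (0:ℝ) ≤ κm ^ 2 * ‖Pih‖ ^ 2) with hD | hD
    · rw [← hD, div_zero, zero_mul]
      exact Real.sInf_nonneg hSXnonneg
    · refine le_csInf hSXne fun s hs => ?_
      rw [div_mul_eq_mul_div, div_le_iff₀ hD]
      calc α * ‖f‖ ^ 2 ≤ κm ^ 2 * ‖Pih‖ ^ 2 * s := key s hs
        _ = s * (κm ^ 2 * ‖Pih‖ ^ 2) := by ring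
  · -- UPPER BOUND
    rw [hsplitX]
    apply le_of_forall_pos_le_add_aux
    intro ε hε
    set C : ℝ := ‖Pih‖ ^ 2 * A * (2 * ‖f‖ + 1) + 1 with hC
    have hC0 : 0 < C := by
      have := norm_nonneg Pih; have := norm_nonneg f; positivity
    set δ : ℝ := min 1 (ε / (C + 1)) with hδ
    have hδpos : 0 < δ := lt_min one_pos (div_pos hε (by linarith))
    have hδ1 : δ ≤ 1 := min_le_left _ _
    have hδ2 : δ ≤ ε / (C + 1) := min_le_right _ _
    obtain ⟨m, hm, hmlt⟩ := Submodule.Quotient.norm_mk_lt f hδpos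
    set w : V := Pih m with hwdef
    have hwVh : w ∈ Vh := hPirange m
    have hwmk : V₀.mkQ w = f := by
      have h0 : m - uf ∈ V₀ := by
        rw [← Submodule.Quotient.mk_eq_zero V₀]
        have : (Submodule.Quotient.mk m : V ⧸ V₀) = Submodule.Quotient.mk uf := by
          rw [hm, ← hufmk]; rfl
        simpa [Submodule.Quotient.mk_sub, sub_eq_zero] using this
      have h1 : w - uf ∈ V₀ := by
        have : w - uf = Pih (m - uf) := by
          rw [hwdef, map_sub, hPiproj uf hufVh]
        rw [this]; exact hPipres _ h0
      have : V₀.mkQ (w - uf) = 0 := by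
        rw [Submodule.mkQ_apply, Submodule.Quotient.mk_eq_zero]; exact h1
      rw [map_sub, sub_eq_zero] at this
      rw [this, hufmk]
    have hw2 : splitNormSqV Vsub w ≤ A * ‖w‖ ^ 2 := (hstable w hwVh).2
    have hwnorm : ‖w‖ ≤ ‖Pih‖ * (‖f‖ + δ) := by
      calc ‖w‖ ≤ ‖Pih‖ * ‖m‖ := Pih.le_opNorm m
        _ ≤ ‖Pih‖ * (‖f‖ + δ) := mul_le_mul_of_nonneg_left hmlt.le (norm_nonneg _)
    -- extract near-optimal splitting of w
    have hSVne : Set.Nonempty {s : ℝ | ∃ ww : Fin n → V,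
        (∀ i, ww i ∈ Vsub i) ∧ (∑ i, ww i) = w ∧ s = ∑ i, ‖ww i‖ ^ 2} := by
      obtain ⟨ww, hww, hwwsum⟩ := exists_split_aux Vsub (hVh ▸ hwVh)
      exact ⟨∑ i, ‖ww i‖ ^ 2, ww, hww, hwwsum, rfl⟩
    obtain ⟨t, ⟨ww, hww, hwwsum, rfl⟩, htlt⟩ := Real.lt_sInf_add_pos hSVne hδpos
    have hmemSX : (∑ i, ‖V₀.mkQ (ww i)‖ ^ 2) ∈ SX := by
      refine ⟨fun i => V₀.mkQ (ww i), fun i => ⟨ww i, hww i, rfl⟩, ?_, rfl⟩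
      rw [← map_sum, hwwsum, hwmk]
    have h5 : sInf SX ≤ ∑ i, ‖V₀.mkQ (ww i)‖ ^ 2 := csInf_le hSXbdd hmemSX
    have h6 : ∑ i, ‖V₀.mkQ (ww i)‖ ^ 2 ≤ ∑ i, ‖ww i‖ ^ 2 :=
      Finset.sum_le_sum fun i _ => pow_le_pow_left₀ (norm_nonneg _) (hmkle (ww i)) 2
    have h7 : ∑ i, ‖ww i‖ ^ 2 < splitNormSqV Vsub w + δ := htlt
    have h8 : splitNormSqV Vsub w ≤ A * (‖Pih‖ * (‖f‖ + δ)) ^ 2 := by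
      refine le_trans hw2 ?_
      apply mul_le_mul_of_nonneg_left _ hA.le
      exact pow_le_pow_left₀ (norm_nonneg w) hwnorm 2
    have h9 : A * (‖Pih‖ * (‖f‖ + δ)) ^ 2 + δ ≤ ‖Pih‖ ^ 2 * A * ‖f‖ ^ 2 + ε := by
      have hPn : (0:ℝ) ≤ ‖Pih‖ := norm_nonneg _
      have hfn : (0:ℝ) ≤ ‖f‖ := norm_nonneg _
      have hδsq : δ ^ 2 ≤ δ := by nlinarith [hδpos.le, hδ1]
      have hexp : A * (‖Pih‖ * (‖f‖ + δ)) ^ 2 ≤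
          ‖Pih‖ ^ 2 * A * ‖f‖ ^ 2 + δ * (‖Pih‖ ^ 2 * A * (2 * ‖f‖ + 1)) := by
        have hin : 2 * ‖f‖ * δ + δ ^ 2 ≤ δ * (2 * ‖f‖ + 1) := by nlinarith
        have hAP : (0:ℝ) ≤ A * ‖Pih‖ ^ 2 := by positivity
        calc A * (‖Pih‖ * (‖f‖ + δ)) ^ 2
            = A * ‖Pih‖ ^ 2 * ‖f‖ ^ 2 + A * ‖Pih‖ ^ 2 * (2 * ‖f‖ * δ + δ ^ 2) := by ring
          _ ≤ A * ‖Pih‖ ^ 2 * ‖f‖ ^ 2 + A * ‖Pih‖ ^ 2 * (δ * (2 * ‖f‖ + 1)) := by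
              have := mul_le_mul_of_nonneg_left hin hAP
              linarith
          _ = ‖Pih‖ ^ 2 * A * ‖f‖ ^ 2 + δ * (‖Pih‖ ^ 2 * A * (2 * ‖f‖ + 1)) := by ring
      have hδC : δ * C ≤ ε := by
        calc δ * C ≤ (ε / (C + 1)) * C := mul_le_mul_of_nonneg_right hδ2 hC0.le
          _ ≤ (ε / (C + 1)) * (C + 1) := by
              apply mul_le_mul_of_nonneg_left (by linarith)
              positivity
          _ = ε := by field_simp
      have : δ * (‖Pih‖ ^ 2 * A * (2 * ‖f‖ + 1)) + δ = δ * C := by rw [hC]; ring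
      linarith
    linarith
end

section
/- Assume condition (A) holds for Π_h, and let E_h = Π_h ∘ Φ, where Φ is the minimal-norm lifting. Then for every f_h ∈ X_h = T(V_h) one has T(E_h f_h) = f_h, and ‖E_h f_h‖_𝕍 ≤ ‖Π_h‖ · ‖f_h‖_𝕏. -/
/-!
The minimal-norm lifting `v ↦ v - P v` does not change the class of `v` and, because `P v` is
the best approximation of `v` in `𝕍₀`, its norm is exactly the quotient norm of that class.
Since `Π_h` preserves `𝕍₀`, it descends to the quotient; as it fixes a representative
`u_h ∈ V_h` of `f_h`, the lifted function `Π_h (v - P v)` is still a representative of `f_h`.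
-/

namespace Submodule

theorem mkQ_apply_eq_of_mkQ_eq {R M : Type*} [Ring R] [AddCommGroup M] [Module R M]
    {K : Submodule R M} {A : M →ₗ[R] M} (hA : K ≤ K.comap A) {x y : M}
    (hxy : K.mkQ x = K.mkQ y) : K.mkQ (A x) = K.mkQ (A y) := by
  simpa only [mkQ_apply, mapQ_apply] using congrArg (K.mapQ K A hA) hxy

variable {𝕜 V : Type*} [RCLike 𝕜] [NormedAddCommGroup V] [InnerProductSpace 𝕜 V]
  (K : Submodule 𝕜 V) [K.HasOrthogonalProjection]

theorem mkQ_sub_starProjection (v : V) : K.mkQ (v - K.starProjection v) = K.mkQ v :=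
  (Quotient.eq K).mpr (by simp [K.starProjection_apply_mem v])

theorem norm_sub_starProjection_eq_norm_mkQ (v : V) :
    ‖v - K.starProjection v‖ = ‖K.mkQ v‖ := by
  have hquot : ‖K.mkQ v‖ = Metric.infDist v K :=
    QuotientAddGroup.norm_mk (S := K.toAddSubgroup) v
  rw [starProjection_minimal, hquot, Metric.infDist_eq_iInf]
  simp only [dist_eq_norm]
  rfl

end Submodule

theorem discrete_harmonic_lifting_stability_general
    {V : Type*} [NormedAddCommGroup V] [InnerProductSpace ℝ V]
    (V₀ : Submodule ℝ V) [CompleteSpace V₀]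
    (Vh : Submodule ℝ V)
    -- Condition (A): a bounded projection `Π_h` onto `V_h` preserving `𝕍₀`.
    (Pih : V →L[ℝ] V)
    (hPiproj : ∀ u ∈ Vh, Pih u = u)
    (hPipres : ∀ u ∈ V₀, Pih u ∈ V₀) :
    ∀ f ∈ Vh.map V₀.mkQ, ∀ v : V, V₀.mkQ v = f →
      V₀.mkQ (Pih (v - (V₀.orthogonalProjectionOnto v : V))) = f ∧
      ‖Pih (v - (V₀.orthogonalProjectionOnto v : V))‖ ≤ ‖Pih‖ * ‖f‖ := by
  rintro _ ⟨u, hu, rfl⟩ v hv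
  simp only [← Submodule.starProjection_apply]
  have hlift : V₀.mkQ (v - V₀.starProjection v) = V₀.mkQ u :=
    (V₀.mkQ_sub_starProjection v).trans hv
  refine ⟨?_, ?_⟩
  · simpa only [ContinuousLinearMap.coe_coe, hPiproj u hu] using
      Submodule.mkQ_apply_eq_of_mkQ_eq (A := (Pih : V →ₗ[ℝ] V)) hPipres hlift
  · calc ‖Pih (v - V₀.starProjection v)‖ ≤ ‖Pih‖ * ‖v - V₀.starProjection v‖ := Pih.le_opNorm _
      _ = ‖Pih‖ * ‖V₀.mkQ u‖ := by rw [V₀.norm_sub_starProjection_eq_norm_mkQ, hv]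

/-- Stability of the discrete harmonic lifting `E_h = Π_h ∘ Φ`, where `Φ` is the
minimal-norm lifting `Φ(T v) = (Id − P)v`, with `P` the orthogonal projection onto `𝕍₀`. -/
theorem discrete_harmonic_lifting_stability
    {V : Type*} [NormedAddCommGroup V] [InnerProductSpace ℝ V] [CompleteSpace V]
    (V₀ : Submodule ℝ V) [CompleteSpace V₀] [IsClosed (V₀ : Set V)]
    (Vh : Submodule ℝ V)
    -- Condition (A): a bounded projection `Π_h` onto `V_h` preserving `𝕍₀`.
    (Pih : V →L[ℝ] V)
    (hPirange : ∀ u : V, Pih u ∈ Vh)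
    (hPiproj : ∀ u ∈ Vh, Pih u = u)
    (hPipres : ∀ u ∈ V₀, Pih u ∈ V₀) :
    ∀ f ∈ Vh.map V₀.mkQ, ∀ v : V, V₀.mkQ v = f →
      V₀.mkQ (Pih (v - (V₀.orthogonalProjectionOnto v : V))) = f ∧
      ‖Pih (v - (V₀.orthogonalProjectionOnto v : V))‖ ≤ ‖Pih‖ * ‖f‖ :=
  discrete_harmonic_lifting_stability_general V₀ Vh Pih hPiproj hPipres
end

section
/- Assume condition (A) holds for Π_h. Then for every u_h ∈ V_h, inf{ ‖u_h − u_{h,0}‖_𝕍 : u_{h,0} ∈ V_h ∩ 𝕍₀ } ≤ ‖Π_h‖ · ‖T(u_h)‖_𝕏. -/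
/-- Bound on the distance from `u_h ∈ V_h` to `V_h ∩ 𝕍₀` by the quotient norm of `T(u_h)`,
assuming condition (A). -/
theorem dist_to_kernel_le_quotient_norm
    {V : Type*} [NormedAddCommGroup V] [InnerProductSpace ℝ V] [CompleteSpace V]
    (V₀ : Submodule ℝ V) [IsClosed (V₀ : Set V)]
    (Vh : Submodule ℝ V)
    -- Condition (A): a bounded projection `Π_h` onto `V_h` preserving `𝕍₀`.
    (Pih : V →L[ℝ] V)
    (hPirange : ∀ u : V, Pih u ∈ Vh)
    (hPiproj : ∀ u ∈ Vh, Pih u = u)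
    (hPipres : ∀ u ∈ V₀, Pih u ∈ V₀) :
    ∀ u ∈ Vh,
      sInf {r : ℝ | ∃ u₀ ∈ Vh ⊓ V₀, r = ‖u - u₀‖} ≤ ‖Pih‖ * ‖V₀.mkQ u‖ := by
  intro u hu
  have hbdd : BddBelow {r : ℝ | ∃ u₀ ∈ Vh ⊓ V₀, r = ‖u - u₀‖} := by
    refine ⟨0, fun r hr => ?_⟩
    obtain ⟨u₀, -, rfl⟩ := hr
    positivity
  refine le_of_forall_pos_le_add fun ε hε => ?_
  set ε' : ℝ := ε / (‖Pih‖ + 1) with hε'def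
  have hnorm : (0:ℝ) ≤ ‖Pih‖ := norm_nonneg _
  have hε' : 0 < ε' := div_pos hε (by linarith)
  obtain ⟨m, hm, hmlt⟩ := Submodule.Quotient.norm_mk_lt (V₀.mkQ u) hε'
  -- m = u - v₀ for some v₀ ∈ V₀
  set v₀ : V := u - m with hv₀def
  have hv₀ : v₀ ∈ V₀ := by
    have h : Submodule.Quotient.mk m = (Submodule.Quotient.mk u : V ⧸ V₀) := hm
    rw [Submodule.Quotient.eq'] at h
    simpa [hv₀def, sub_eq_neg_add] using h
  have hPv₀ : Pih v₀ ∈ Vh ⊓ V₀ := ⟨hPirange v₀, hPipres v₀ hv₀⟩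
  have hmemS : ‖u - Pih v₀‖ ∈ {r : ℝ | ∃ u₀ ∈ Vh ⊓ V₀, r = ‖u - u₀‖} :=
    ⟨Pih v₀, hPv₀, rfl⟩
  have key : ‖u - Pih v₀‖ ≤ ‖Pih‖ * ‖m‖ := by
    have e1 : u - v₀ = m := by simp [hv₀def]
    have e2 : u - Pih v₀ = Pih (u - v₀) := by
      simp only [hv₀def, map_sub, hPiproj u hu]
      try abel
    rw [e2, e1]
    exact Pih.le_opNorm m
  have h1 : sInf {r : ℝ | ∃ u₀ ∈ Vh ⊓ V₀, r = ‖u - u₀‖} ≤ ‖Pih‖ * ‖m‖ :=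
    le_trans (csInf_le hbdd hmemS) key
  have h2 : ‖Pih‖ * ‖m‖ ≤ ‖Pih‖ * (‖V₀.mkQ u‖ + ε') :=
    mul_le_mul_of_nonneg_left hmlt.le hnorm
  have h3 : ‖Pih‖ * ε' ≤ ε := by
    rw [hε'def]
    calc ‖Pih‖ * (ε / (‖Pih‖ + 1)) ≤ (‖Pih‖ + 1) * (ε / (‖Pih‖ + 1)) := by
          apply mul_le_mul_of_nonneg_right (by linarith) (by positivity)
      _ = ε := by field_simp
  nlinarith [norm_nonneg (V₀.mkQ u)]
end

section
/- Assume condition (A) holds for Π_h. Then there exists a linear operator E_h : X_h → V_h, where X_h = T(V_h), such that T(E_h f_h) = f_h for all f_h ∈ X_h and ‖E_h f_h‖_𝕍 ≤ ‖Π_h‖ · ‖f_h‖_𝕏 for all f_h ∈ X_h; in particular the operator norm of E_h is at most ‖Π_h‖. -/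
/-!
Lift a class `f ∈ X_h` to its representative orthogonal to `𝕍₀`, whose norm is `‖f‖_𝕏`, and
apply `Π_h`. The result lies in `V_h`, has norm at most `‖Π_h‖ ‖f‖_𝕏`, and still represents `f`:
since `Π_h` preserves `𝕍₀` it descends to `𝕍/𝕍₀`, and it fixes a representative `u ∈ V_h` of `f`.
-/

namespace Submodule

variable {𝕜 E : Type*} [RCLike 𝕜] [NormedAddCommGroup E] [InnerProductSpace 𝕜 E]
  (K : Submodule 𝕜 E) [K.HasOrthogonalProjection]

noncomputable def orthogonalLift : (E ⧸ K) →ₗᵢ[𝕜] E :=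
  Kᗮ.subtypeₗᵢ.comp K.quotientEquivOrthogonal.toLinearIsometry

@[simp]
theorem mkQ_orthogonalLift (x : E ⧸ K) : K.mkQ (K.orthogonalLift x) = x :=
  calc K.mkQ (K.orthogonalLift x)
      = K.quotientEquivOrthogonal.symm (K.quotientEquivOrthogonal x) :=
        (K.quotientEquivOrthogonal_symm_eq_mk _ (K.quotientEquivOrthogonal x).2).symm
    _ = x := K.quotientEquivOrthogonal.symm_apply_apply x

end Submodule

/-- Condition (A) implies condition (A'): existence of a bounded linear extension
operator `E_h : X_h → V_h` with `T ∘ E_h = Id` and `‖E_h‖ ≤ ‖Π_h‖`. -/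
theorem exists_extension_operator
    {V : Type*} [NormedAddCommGroup V] [InnerProductSpace ℝ V] [CompleteSpace V]
    (V₀ : Submodule ℝ V) [IsClosed (V₀ : Set V)]
    (Vh : Submodule ℝ V)
    -- Condition (A): a bounded projection `Π_h` onto `V_h` preserving `𝕍₀`.
    (Pih : V →L[ℝ] V)
    (hPirange : ∀ u : V, Pih u ∈ Vh)
    (hPiproj : ∀ u ∈ Vh, Pih u = u)
    (hPipres : ∀ u ∈ V₀, Pih u ∈ V₀) :
    ∃ E : ↥(Vh.map V₀.mkQ) →ₗ[ℝ] V,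
      (∀ f : ↥(Vh.map V₀.mkQ), E f ∈ Vh) ∧
      (∀ f : ↥(Vh.map V₀.mkQ), V₀.mkQ (E f) = (f : V ⧸ V₀)) ∧
      (∀ f : ↥(Vh.map V₀.mkQ), ‖E f‖ ≤ ‖Pih‖ * ‖(f : V ⧸ V₀)‖) := by
  have : CompleteSpace V₀ := ‹IsClosed (V₀ : Set V)›.completeSpace_coe
  refine ⟨Pih.toLinearMap ∘ₗ V₀.orthogonalLift.toLinearMap ∘ₗ (Vh.map V₀.mkQ).subtype,
    fun f => hPirange _, ?_, ?_⟩
  · rintro ⟨_, u, hu, rfl⟩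
    let PiQ := V₀.mapQ V₀ Pih.toLinearMap hPipres
    calc V₀.mkQ (Pih (V₀.orthogonalLift (V₀.mkQ u)))
        = PiQ (V₀.mkQ (V₀.orthogonalLift (V₀.mkQ u))) := rfl
      _ = PiQ (V₀.mkQ u) := by rw [V₀.mkQ_orthogonalLift]
      _ = V₀.mkQ u := by simp [PiQ, hPiproj u hu]
  · intro f
    calc ‖Pih (V₀.orthogonalLift f)‖ ≤ ‖Pih‖ * ‖V₀.orthogonalLift f‖ := Pih.le_opNorm _
      _ = ‖Pih‖ * ‖(f : V ⧸ V₀)‖ := by rw [LinearIsometry.norm_map]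
end

section
/- Assume condition (A) holds for Π_h, and assume condition (B) holds for the index i with constant κ_i > 0. Then there exists a linear operator E_{h,i} : X_{h,i} → V_{h,i}, where X_{h,i} = T(V_{h,i}), such that T(E_{h,i} f_{h,i}) = f_{h,i} for all f_{h,i} ∈ X_{h,i} and ‖E_{h,i} f_{h,i}‖_𝕍 ≤ κ_i ‖Π_h‖ · ‖f_{h,i}‖_𝕏 for all f_{h,i} ∈ X_{h,i}. -/
/-!
Take `E` to be the lift of minimal norm into `V_{h,i}`: lift `f` linearly to some `u ∈ V_{h,i}`
and subtract its orthogonal projection onto `𝕍₀ ∩ V_{h,i}`. Then `‖E f‖` is the distance from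
`E f` to `𝕍₀ ∩ V_{h,i}`, which by (B) is at most `κᵢ` times the distance to `𝕍₀ ∩ V_h`. For every
representative `m` of `f`, the vector `Π_h (E f - m)` lies in `𝕍₀ ∩ V_h` at distance
`‖Π_h m‖ ≤ ‖Π_h‖ ‖m‖` from `E f`, so that distance is at most `‖Π_h‖ ‖f‖_𝕏`.
-/

open Metric Filter Topology

theorem sInf_norm_sub_eq_infDist {V : Type*} [SeminormedAddCommGroup V] (u : V) (s : Set V) :
    sInf {r : ℝ | ∃ u₀ ∈ s, r = ‖u - u₀‖} = infDist u s := by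
  rw [infDist_eq_iInf, iInf, Set.range]
  congr 1
  ext r
  simp [dist_eq_norm, eq_comm]

theorem Submodule.infDist_eq_norm_of_mem_orthogonal {V : Type*} [NormedAddCommGroup V]
    [InnerProductSpace ℝ V] {K : Submodule ℝ V} {u : V} (hu : u ∈ Kᗮ) :
    infDist u K = ‖u‖ := by
  rw [infDist_eq_iInf]
  simp only [dist_eq_norm]
  refine ((norm_eq_iInf_iff_real_inner_eq_zero K K.zero_mem).2 fun w hw => ?_).symm.trans ?_
  · rw [sub_zero, real_inner_comm]
    exact hu w hw
  · rw [sub_zero]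

theorem Submodule.le_mul_quotient_norm_of_forall {M : Type*} [SeminormedAddCommGroup M]
    [Module ℝ M] {S : Submodule ℝ M} {x : M ⧸ S} {c C : ℝ} (hC : 0 ≤ C)
    (h : ∀ m, Submodule.Quotient.mk m = x → c ≤ C * ‖m‖) : c ≤ C * ‖x‖ := by
  have hgt : ∀ r ∈ Set.Ioi ‖x‖, c ≤ C * r := fun r hr => by
    obtain ⟨m, hm, hmr⟩ := Submodule.Quotient.norm_mk_lt x (sub_pos.2 (Set.mem_Ioi.1 hr))
    exact (h m hm).trans (by gcongr; linarith)
  exact ge_of_tendsto ((continuous_const_mul C).tendsto _ |>.mono_left nhdsWithin_le_nhds)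
    (eventually_nhdsWithin_of_forall hgt)

theorem infDist_inf_le_opNorm_mul_norm_mkQ {V : Type*} [SeminormedAddCommGroup V]
    [NormedSpace ℝ V] {S W : Submodule ℝ V} {P : V →L[ℝ] V} (hPrange : ∀ u, P u ∈ W)
    (hPproj : ∀ u ∈ W, P u = u) (hPpres : ∀ u ∈ S, P u ∈ S) {u : V} (hu : u ∈ W) :
    infDist u (S ⊓ W : Submodule ℝ V) ≤ ‖P‖ * ‖S.mkQ u‖ := by
  refine Submodule.le_mul_quotient_norm_of_forall (norm_nonneg P) fun m hm => ?_
  have hum : u - m ∈ S := by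
    rw [← Submodule.Quotient.eq]
    exact hm.symm
  have hPm : u - P (u - m) = P m := by rw [map_sub, hPproj u hu, sub_sub_cancel]
  calc infDist u (S ⊓ W : Submodule ℝ V) ≤ dist u (P (u - m)) :=
        infDist_le_dist_of_mem ⟨hPpres _ hum, hPrange _⟩
    _ = ‖P m‖ := by rw [dist_eq_norm, hPm]
    _ ≤ ‖P‖ * ‖m‖ := P.le_opNorm m

theorem Submodule.exists_linearMap_lift_mem_orthogonal {V : Type*} [NormedAddCommGroup V]
    [InnerProductSpace ℝ V] (S W : Submodule ℝ V) [(S ⊓ W).HasOrthogonalProjection] :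
    ∃ E : W.map S.mkQ →ₗ[ℝ] V, ∀ f, E f ∈ W ∧ S.mkQ (E f) = f ∧ E f ∈ (S ⊓ W)ᗮ := by
  obtain ⟨s, hs⟩ := (S.mkQ.submoduleMap W).exists_rightInverse_of_surjective
    (LinearMap.range_eq_top.2 (S.mkQ.submoduleMap_surjective W))
  let K := S ⊓ W
  refine ⟨(LinearMap.id - K.starProjection.toLinearMap) ∘ₗ W.subtype ∘ₗ s, fun f => ?_⟩
  have hsf : S.mkQ (s f) = f := congr_arg Subtype.val (LinearMap.congr_fun hs f)
  have hproj : K.starProjection (s f) ∈ K := K.starProjection_apply_mem _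
  refine ⟨W.sub_mem (s f).2 hproj.2, ?_, K.sub_starProjection_mem_orthogonal _⟩
  change S.mkQ ((s f : V) - K.starProjection (s f)) = f
  rw [map_sub, hsf, S.mkQ_apply, (Submodule.Quotient.mk_eq_zero S).2 hproj.1, sub_zero]

theorem exists_local_extension_operator_general
    {V : Type*} [NormedAddCommGroup V] [InnerProductSpace ℝ V]
    (V₀ : Submodule ℝ V)
    {n : ℕ} (Vsub : Fin n → Submodule ℝ V) [∀ i, FiniteDimensional ℝ (Vsub i)]
    (Vh : Submodule ℝ V) (hVh : Vh = ⨆ i, Vsub i)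
    -- Condition (A): a bounded projection `Π_h` onto `V_h` preserving `𝕍₀`.
    (Pih : V →L[ℝ] V)
    (hPirange : ∀ u : V, Pih u ∈ Vh)
    (hPiproj : ∀ u ∈ Vh, Pih u = u)
    (hPipres : ∀ u ∈ V₀, Pih u ∈ V₀)
    -- Condition (B) for the index `i`, with constant `κᵢ > 0`.
    (i : Fin n) (κi : ℝ) (hκi : 0 < κi)
    (hB : ∀ u ∈ Vsub i,
      sInf {r : ℝ | ∃ u₀ ∈ V₀ ⊓ Vsub i, r = ‖u - u₀‖} ≤
        κi * sInf {r : ℝ | ∃ u₀ ∈ V₀ ⊓ Vh, r = ‖u - u₀‖}) :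
    ∃ E : ↥((Vsub i).map V₀.mkQ) →ₗ[ℝ] V,
      (∀ f : ↥((Vsub i).map V₀.mkQ), E f ∈ Vsub i) ∧
      (∀ f : ↥((Vsub i).map V₀.mkQ), V₀.mkQ (E f) = (f : V ⧸ V₀)) ∧
      (∀ f : ↥((Vsub i).map V₀.mkQ), ‖E f‖ ≤ κi * ‖Pih‖ * ‖(f : V ⧸ V₀)‖) := by
  obtain ⟨E, hE⟩ := V₀.exists_linearMap_lift_mem_orthogonal (Vsub i)
  refine ⟨E, fun f => (hE f).1, fun f => (hE f).2.1, fun f => ?_⟩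
  obtain ⟨hmem, hlift, horth⟩ := hE f
  have hBf := hB (E f) hmem
  simp only [← SetLike.mem_coe, sInf_norm_sub_eq_infDist,
    Submodule.infDist_eq_norm_of_mem_orthogonal horth] at hBf
  have hA := infDist_inf_le_opNorm_mul_norm_mkQ hPirange hPiproj hPipres
    ((hVh ▸ le_iSup Vsub i : Vsub i ≤ Vh) hmem)
  calc ‖E f‖ ≤ κi * infDist (E f) (V₀ ⊓ Vh : Submodule ℝ V) := hBf
    _ ≤ κi * (‖Pih‖ * ‖V₀.mkQ (E f)‖) := by gcongr
    _ = κi * ‖Pih‖ * ‖(f : V ⧸ V₀)‖ := by rw [hlift, mul_assoc]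

/-- Conditions (A) and (B) for the index `i` imply condition (B'): existence of a
linear extension operator `E_{h,i} : X_{h,i} → V_{h,i}` with `T ∘ E_{h,i} = Id` and
`‖E_{h,i} f‖ ≤ κ_i ‖Π_h‖ ‖f‖`. -/
theorem exists_local_extension_operator
    {V : Type*} [NormedAddCommGroup V] [InnerProductSpace ℝ V] [CompleteSpace V]
    (V₀ : Submodule ℝ V) [IsClosed (V₀ : Set V)]
    {n : ℕ} (Vsub : Fin n → Submodule ℝ V) [∀ i, FiniteDimensional ℝ (Vsub i)]
    (Vh : Submodule ℝ V) (hVh : Vh = ⨆ i, Vsub i)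
    -- Condition (A): a bounded projection `Π_h` onto `V_h` preserving `𝕍₀`.
    (Pih : V →L[ℝ] V)
    (hPirange : ∀ u : V, Pih u ∈ Vh)
    (hPiproj : ∀ u ∈ Vh, Pih u = u)
    (hPipres : ∀ u ∈ V₀, Pih u ∈ V₀)
    -- Condition (B) for the index `i`, with constant `κᵢ > 0`.
    (i : Fin n) (κi : ℝ) (hκi : 0 < κi)
    (hB : ∀ u ∈ Vsub i,
      sInf {r : ℝ | ∃ u₀ ∈ V₀ ⊓ Vsub i, r = ‖u - u₀‖} ≤
        κi * sInf {r : ℝ | ∃ u₀ ∈ V₀ ⊓ Vh, r = ‖u - u₀‖}) :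
    ∃ E : ↥((Vsub i).map V₀.mkQ) →ₗ[ℝ] V,
      (∀ f : ↥((Vsub i).map V₀.mkQ), E f ∈ Vsub i) ∧
      (∀ f : ↥((Vsub i).map V₀.mkQ), V₀.mkQ (E f) = (f : V ⧸ V₀)) ∧
      (∀ f : ↥((Vsub i).map V₀.mkQ), ‖E f‖ ≤ κi * ‖Pih‖ * ‖(f : V ⧸ V₀)‖) :=
  exists_local_extension_operator_general V₀ Vsub Vh hVh Pih hPirange hPiproj hPipres i κi hκi hB
end
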